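/- arXiv:2204.02634 — 7 statements merged into one kernel-verified Lean document; each statement's English description precedes it below -/
import Mathlib

section
/- There exist a nonempty finite state space S, a nonempty finite action space A, a discount factor γ ∈ (0,1), a reward function R : S × A → ℝ, two transition kernels P₁, P₂ on S × A, and an initial distribution d₀ on S with the following property: writing g_d(π) := (1/2) Σ_{i=1}^{2} Σ_{s∈S} d(s) · V_{P_i}^π(s) for a distribution d on S and a policy π, every policy π⋆ that maximizes g_{d₀} over all policies admits another initial distribution d₀′ on S and another policy π̃ such that g_{d₀}(π̃) < g_{d₀}(π⋆) and g_{d₀′}(π̃) > g_{d₀′}(π⋆). -/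
open Finset

noncomputable section StmtAux

open Classical

def Pa : Fin 5 → Fin 2 → Fin 5 → ℝ := fun s a s' =>
  if s = 0 then (if s' = 1 then 1 else 0)
  else if s = 1 then (if a = 0 then (if s' = 2 then 1 else 0) else (if s' = 4 then 1 else 0))
  else if s' = s then 1 else 0

def Pb : Fin 5 → Fin 2 → Fin 5 → ℝ := fun s a s' =>
  if s = 0 then (if s' = 4 then 1 else 0)
  else if s = 1 then (if a = 0 then (if s' = 4 then 1 else 0) else (if s' = 3 then 1 else 0))
  else if s' = s then 1 else 0

def Rw : Fin 5 → Fin 2 → ℝ := fun s _ => if s = 2 then 1 else if s = 3 then 3/2 else 0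

def V1 (π : Fin 5 → Fin 2 → ℝ) : Fin 5 → ℝ := fun s =>
  if s = 0 then π 1 0 / 2 else if s = 1 then π 1 0
  else if s = 2 then 2 else if s = 3 then 3 else 0

def V2 (π : Fin 5 → Fin 2 → ℝ) : Fin 5 → ℝ := fun s =>
  if s = 0 then 0 else if s = 1 then 3/2 * π 1 1
  else if s = 2 then 2 else if s = 3 then 3 else 0

def Vv : (Fin 5 → Fin 2 → Fin 5 → ℝ) → (Fin 5 → Fin 2 → ℝ) → Fin 5 → ℝ :=
  fun P π => if P = Pa then V1 π else V2 π

lemma Pb_ne_Pa : Pb ≠ Pa := by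
  intro h
  have := congrFun (congrFun (congrFun h 0) 0) 1
  simp [Pa, Pb] at this

lemma Vv_Pa (π : Fin 5 → Fin 2 → ℝ) : Vv Pa π = V1 π := by simp [Vv]

lemma Vv_Pb (π : Fin 5 → Fin 2 → ℝ) : Vv Pb π = V2 π := by simp [Vv, Pb_ne_Pa]

end StmtAux


/-- There exist a nonempty finite state space `S = Fin nS`, a nonempty finite
action space `A = Fin nA`, a discount factor `γ ∈ (0,1)`, a reward function `R`, two
transition kernels `P₁, P₂`, and an initial distribution `d₀` such that, writing
`g d π = (1/2) ∑_{i=1,2} ∑_s d s * V_{P_i}^π s` (where `V P π` is the value function,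
i.e. the unique solution of the Bellman equation), every policy `π⋆` maximizing `g d₀`
admits another initial distribution `d₀'` and another policy `π̃` with
`g d₀ π̃ < g d₀ π⋆` and `g d₀' π̃ > g d₀' π⋆`. -/
theorem stmt_0 :
    ∃ (nS nA : ℕ), 0 < nS ∧ 0 < nA ∧
    ∃ (γ : ℝ), 0 < γ ∧ γ < 1 ∧
    ∃ (R : Fin nS → Fin nA → ℝ)
      (P₁ P₂ : Fin nS → Fin nA → Fin nS → ℝ)
      (d₀ : Fin nS → ℝ)
      (V : (Fin nS → Fin nA → Fin nS → ℝ) → (Fin nS → Fin nA → ℝ) → Fin nS → ℝ),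
      (∀ s a s', 0 ≤ P₁ s a s') ∧ (∀ s a, ∑ s', P₁ s a s' = 1) ∧
      (∀ s a s', 0 ≤ P₂ s a s') ∧ (∀ s a, ∑ s', P₂ s a s' = 1) ∧
      (∀ s, 0 ≤ d₀ s) ∧ (∑ s, d₀ s = 1) ∧
      -- `V P π` satisfies the Bellman equation (hence it is the value function) for
      -- each of the two kernels and every policy π
      (∀ P, (P = P₁ ∨ P = P₂) → ∀ π : Fin nS → Fin nA → ℝ,
        (∀ s a, 0 ≤ π s a) → (∀ s, ∑ a, π s a = 1) →
        ∀ s, V P π s = (∑ a, π s a * R s a)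
          + γ * ∑ s', (∑ a, π s a * P s a s') * V P π s') ∧
      -- the main property
      (∀ πstar : Fin nS → Fin nA → ℝ,
        (∀ s a, 0 ≤ πstar s a) → (∀ s, ∑ a, πstar s a = 1) →
        (∀ π : Fin nS → Fin nA → ℝ, (∀ s a, 0 ≤ π s a) → (∀ s, ∑ a, π s a = 1) →
          (1/2 : ℝ) * ((∑ s, d₀ s * V P₁ π s) + (∑ s, d₀ s * V P₂ π s)) ≤
          (1/2 : ℝ) * ((∑ s, d₀ s * V P₁ πstar s) + (∑ s, d₀ s * V P₂ πstar s))) →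
        ∃ (d₀' : Fin nS → ℝ) (πt : Fin nS → Fin nA → ℝ),
          (∀ s, 0 ≤ d₀' s) ∧ (∑ s, d₀' s = 1) ∧
          (∀ s a, 0 ≤ πt s a) ∧ (∀ s, ∑ a, πt s a = 1) ∧
          (1/2 : ℝ) * ((∑ s, d₀ s * V P₁ πt s) + (∑ s, d₀ s * V P₂ πt s)) <
            (1/2 : ℝ) * ((∑ s, d₀ s * V P₁ πstar s) + (∑ s, d₀ s * V P₂ πstar s)) ∧
          (1/2 : ℝ) * ((∑ s, d₀' s * V P₁ πstar s) + (∑ s, d₀' s * V P₂ πstar s)) <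
            (1/2 : ℝ) * ((∑ s, d₀' s * V P₁ πt s) + (∑ s, d₀' s * V P₂ πt s))) := by
  refine ⟨5, 2, by norm_num, by norm_num, 1/2, by norm_num, by norm_num,
    Rw, Pa, Pb, (fun s => if s = 0 then 1 else 0), Vv, ?_, ?_, ?_, ?_, ?_, ?_, ?_, ?_⟩
  · intro s a s'; unfold Pa; split_ifs <;> norm_num
  · intro s a; fin_cases s <;> fin_cases a <;>
      simp [Pa, Fin.sum_univ_five]
  · intro s a s'; unfold Pb; split_ifs <;> norm_num
  · intro s a; fin_cases s <;> fin_cases a <;>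
      simp [Pb, Fin.sum_univ_five]
  · intro s; dsimp only; split_ifs <;> norm_num
  · simp [Fin.sum_univ_five]
  · rintro P (rfl | rfl) π hpos hsum s
    · rw [Vv_Pa]
      have h0 := hsum 0; have h1 := hsum 1; have h2 := hsum 2
      have h3 := hsum 3; have h4 := hsum 4
      simp [Fin.sum_univ_two] at h0 h1 h2 h3 h4
      fin_cases s <;>
        simp [V1, Pa, Rw, Fin.sum_univ_five, Fin.sum_univ_two] <;>
        first
          | ring1
          | linear_combination (-(π 1 0)/2) * h0
          | linear_combination (-2) * h2
          | linear_combination (-3) * h3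
    · rw [Vv_Pb]
      have h0 := hsum 0; have h1 := hsum 1; have h2 := hsum 2
      have h3 := hsum 3; have h4 := hsum 4
      simp [Fin.sum_univ_two] at h0 h1 h2 h3 h4
      fin_cases s <;>
        simp [V2, Pb, Rw, Fin.sum_univ_five, Fin.sum_univ_two] <;>
        first
          | ring1
          | linear_combination (-2) * h2
          | linear_combination (-3) * h3
  · intro πstar hpos hsum hmax
    have hkey : πstar 1 0 = 1 := by
      have := hmax (fun _ a => if a = 0 then 1 else 0)
        (by intro s a; split_ifs <;> norm_num)
        (by intro s; simp [Fin.sum_univ_two])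
      simp [Vv_Pa, Vv_Pb, V1, V2, Fin.sum_univ_five] at this
      have h1 := hsum 1; simp [Fin.sum_univ_two] at h1
      have := hpos 1 1
      linarith
    have hkey' : πstar 1 1 = 0 := by
      have h1 := hsum 1; simp [Fin.sum_univ_two] at h1; linarith
    refine ⟨(fun s => if s = 1 then 1 else 0), (fun _ a => if a = 1 then 1 else 0),
      (by intro s; dsimp only; split_ifs <;> norm_num),
      (by simp [Fin.sum_univ_five]),
      (by intro s a; dsimp only; split_ifs <;> norm_num),
      (by intro s; simp [Fin.sum_univ_two]), ?_, ?_⟩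
    · simp [Vv_Pa, Vv_Pb, V1, V2, Fin.sum_univ_five, hkey]
      try norm_num
    · simp [Vv_Pa, Vv_Pb, V1, V2, Fin.sum_univ_five, hkey, hkey']
      try norm_num
end

section
/- Assume 0 ≤ R(s,a) ≤ 1 for all s, a, and let κ₁ ≥ 0 be a constant such that for every policy π and every state s, Σ_{s′} Σ_{i=1}^n |P_i^π(s′|s) − P̄^π(s′|s)| ≤ κ₁. Then for every policy π and every state s, |V̄^π(s) − V_I^π(s)| ≤ γκ₁/(1−γ)². -/
open Finset

/-- Contraction bound: if `|f s| ≤ c + γ ∑ q s s' |f s'|` with `q` stochastic, then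
`|f s| ≤ c / (1 - γ)`. -/
lemma contraction_bound {S : Type*} [Fintype S] [Nonempty S] (γ c : ℝ)
    (hγ0 : 0 ≤ γ) (hγ1 : γ < 1) (f : S → ℝ) (q : S → S → ℝ)
    (hq0 : ∀ s s', 0 ≤ q s s') (hq1 : ∀ s, ∑ s', q s s' = 1)
    (h : ∀ s, |f s| ≤ c + γ * ∑ s', q s s' * |f s'|) :
    ∀ s, |f s| ≤ c / (1 - γ) := by
  obtain ⟨s₀, -, hs₀⟩ := Finset.exists_max_image Finset.univ (fun s => |f s|)
    ⟨Classical.arbitrary S, Finset.mem_univ _⟩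
  have key : |f s₀| ≤ c + γ * |f s₀| := by
    have h1 : ∑ s', q s₀ s' * |f s'| ≤ ∑ s', q s₀ s' * |f s₀| := by
      apply Finset.sum_le_sum
      intro s' _
      exact mul_le_mul_of_nonneg_left (hs₀ s' (Finset.mem_univ _)) (hq0 s₀ s')
    have h2 : ∑ s', q s₀ s' * |f s₀| = |f s₀| := by
      rw [← Finset.sum_mul, hq1 s₀, one_mul]
    calc |f s₀| ≤ c + γ * ∑ s', q s₀ s' * |f s'| := h s₀
      _ ≤ c + γ * ∑ s', q s₀ s' * |f s₀| := by
          exact add_le_add (le_refl c) (mul_le_mul_of_nonneg_left h1 hγ0)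
      _ = c + γ * |f s₀| := by rw [h2]
  have hbound : |f s₀| ≤ c / (1 - γ) := by
    rw [le_div_iff₀ (by linarith)]
    nlinarith
  intro s
  exact le_trans (hs₀ s (Finset.mem_univ _)) hbound

/-- Assume `0 ≤ R(s,a) ≤ 1`, and let `κ₁ ≥ 0` satisfy, for every policy `π`
and every state `s`, `∑_{s'} ∑_i |P_i^π(s'|s) − P̄^π(s'|s)| ≤ κ₁`. Then for every policy
`π` and every state `s`, `|V̄^π(s) − V_I^π(s)| ≤ γκ₁/(1−γ)²`, where `V̄^π` is the average
of the per-environment value functions and `V_I^π` is the value function in the imaginary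
environment with averaged transition `P̄`. Value functions are characterized as the
(unique, since `γ < 1`) solutions of the Bellman equations. -/
theorem stmt_2 {S A : Type*} [Fintype S] [Fintype A] [Nonempty S] [Nonempty A]
    (γ : ℝ) (hγ0 : 0 ≤ γ) (hγ1 : γ < 1)
    (n : ℕ) (hn : 1 ≤ n)
    (R : S → A → ℝ) (hR0 : ∀ s a, 0 ≤ R s a) (hR1 : ∀ s a, R s a ≤ 1)
    (P : Fin n → S → A → S → ℝ)
    (hPpos : ∀ k s a s', 0 ≤ P k s a s')
    (hPsum : ∀ k s a, ∑ s', P k s a s' = 1)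
    (κ₁ : ℝ) (hκ0 : 0 ≤ κ₁)
    -- environment heterogeneity bound, for every policy and state
    (hκ : ∀ π : S → A → ℝ, (∀ s a, 0 ≤ π s a) → (∀ s, ∑ a, π s a = 1) →
      ∀ s : S, ∑ s', ∑ k,
        |(∑ a, π s a * P k s a s') - (1 / (n : ℝ)) * ∑ j, (∑ a, π s a * P j s a s')|
        ≤ κ₁) :
    -- conclusion: for every policy π (with value functions V k and VI) and every state s
    ∀ π : S → A → ℝ, (∀ s a, 0 ≤ π s a) → (∀ s, ∑ a, π s a = 1) →
    ∀ V : Fin n → S → ℝ,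
      (∀ k s, V k s = (∑ a, π s a * R s a)
        + γ * ∑ s', (∑ a, π s a * P k s a s') * V k s') →
    ∀ VI : S → ℝ,
      (∀ s, VI s = (∑ a, π s a * R s a)
        + γ * ∑ s', (∑ a, π s a * ((1 / (n : ℝ)) * ∑ k, P k s a s')) * VI s') →
    ∀ s, |(1 / (n : ℝ)) * (∑ k, V k s) - VI s| ≤ γ * κ₁ / (1 - γ) ^ 2 := by
  intro π hπ0 hπ1 V hV VI hVI
  have hn' : (0 : ℝ) < n := by exact_mod_cast Nat.lt_of_lt_of_le Nat.zero_lt_one hn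
  -- policy-averaged transitions
  set Pπ : Fin n → S → S → ℝ := fun k s s' => ∑ a, π s a * P k s a s' with hPπ
  set Q : S → S → ℝ := fun s s' => (1 / (n : ℝ)) * ∑ k, Pπ k s s' with hQ
  have hPπ0 : ∀ k s s', 0 ≤ Pπ k s s' := fun k s s' =>
    Finset.sum_nonneg fun a _ => mul_nonneg (hπ0 s a) (hPpos k s a s')
  have hPπ1 : ∀ k s, ∑ s', Pπ k s s' = 1 := by
    intro k s
    rw [Finset.sum_comm]
    simp only [← Finset.mul_sum]
    simp only [hPsum, mul_one]
    exact hπ1 s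
  have hQ0 : ∀ s s', 0 ≤ Q s s' := fun s s' =>
    mul_nonneg (by positivity) (Finset.sum_nonneg fun k _ => hPπ0 k s s')
  have hQ1 : ∀ s, ∑ s', Q s s' = 1 := by
    intro s
    simp only [hQ, ← Finset.mul_sum]
    rw [Finset.sum_comm]
    simp only [hPπ1]
    simp
    field_simp
  -- rewrite VI's Bellman equation using Q
  have hQeq : ∀ s s' : S, (∑ a, π s a * ((1 / (n : ℝ)) * ∑ k, P k s a s')) = Q s s' := by
    intro s s'
    simp only [hQ, hPπ, Finset.mul_sum]
    rw [Finset.sum_comm]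
    exact Finset.sum_congr rfl fun a _ => Finset.sum_congr rfl fun k _ => by ring
  have hVI' : ∀ s, VI s = (∑ a, π s a * R s a) + γ * ∑ s', Q s s' * VI s' := by
    intro s
    rw [hVI s]
    congr 2
    exact Finset.sum_congr rfl fun s' _ => by rw [hQeq s s']
  -- reward bounds
  have hRπ0 : ∀ s, 0 ≤ ∑ a, π s a * R s a := fun s =>
    Finset.sum_nonneg fun a _ => mul_nonneg (hπ0 s a) (hR0 s a)
  have hRπ1 : ∀ s, ∑ a, π s a * R s a ≤ 1 := by
    intro s
    calc ∑ a, π s a * R s a ≤ ∑ a, π s a * 1 :=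
      Finset.sum_le_sum fun a _ => mul_le_mul_of_nonneg_left (hR1 s a) (hπ0 s a)
      _ = 1 := by simp [hπ1 s]
  -- value functions bounded by 1/(1-γ)
  have hVb : ∀ k s, |V k s| ≤ 1 / (1 - γ) := by
    intro k
    apply contraction_bound γ 1 hγ0 hγ1 (V k) (Pπ k) (hPπ0 k) (hPπ1 k)
    intro s
    rw [hV k s]
    calc |(∑ a, π s a * R s a) + γ * ∑ s', Pπ k s s' * V k s'|
        ≤ |∑ a, π s a * R s a| + |γ * ∑ s', Pπ k s s' * V k s'| := abs_add_le _ _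
      _ ≤ 1 + γ * ∑ s', Pπ k s s' * |V k s'| := by
          apply add_le_add
          · rw [abs_of_nonneg (hRπ0 s)]; exact hRπ1 s
          · rw [abs_mul, abs_of_nonneg hγ0]
            apply mul_le_mul_of_nonneg_left _ hγ0
            calc |∑ s', Pπ k s s' * V k s'| ≤ ∑ s', |Pπ k s s' * V k s'| :=
                Finset.abs_sum_le_sum_abs _ _
              _ = ∑ s', Pπ k s s' * |V k s'| := by
                  apply Finset.sum_congr rfl
                  intro s' _
                  rw [abs_mul, abs_of_nonneg (hPπ0 k s s')]
  -- the difference function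
  set D : S → ℝ := fun s => (1 / (n : ℝ)) * (∑ k, V k s) - VI s with hD
  -- the heterogeneity error term
  have hE : ∀ s, |(1 / (n : ℝ)) * ∑ k, ∑ s', (Pπ k s s' - Q s s') * V k s'|
      ≤ κ₁ / (1 - γ) := by
    intro s
    have h1 : |∑ k, ∑ s', (Pπ k s s' - Q s s') * V k s'|
        ≤ ∑ s', ∑ k, |Pπ k s s' - Q s s'| * (1 / (1 - γ)) := by
      rw [Finset.sum_comm]
      calc |∑ s', ∑ k, (Pπ k s s' - Q s s') * V k s'|
          ≤ ∑ s', |∑ k, (Pπ k s s' - Q s s') * V k s'| := Finset.abs_sum_le_sum_abs _ _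
        _ ≤ ∑ s', ∑ k, |(Pπ k s s' - Q s s') * V k s'| :=
            Finset.sum_le_sum fun s' _ => Finset.abs_sum_le_sum_abs _ _
        _ ≤ ∑ s', ∑ k, |Pπ k s s' - Q s s'| * (1 / (1 - γ)) := by
            apply Finset.sum_le_sum; intro s' _
            apply Finset.sum_le_sum; intro k _
            rw [abs_mul]
            exact mul_le_mul_of_nonneg_left (hVb k s') (abs_nonneg _)
    have h2 : ∑ s', ∑ k, |Pπ k s s' - Q s s'| * (1 / (1 - γ))
        = (∑ s', ∑ k, |Pπ k s s' - Q s s'|) * (1 / (1 - γ)) := by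
      rw [Finset.sum_mul]
      apply Finset.sum_congr rfl
      intro s' _
      rw [Finset.sum_mul]
    have h3 : ∑ s', ∑ k, |Pπ k s s' - Q s s'| ≤ κ₁ := hκ π hπ0 hπ1 s
    have hγpos : (0:ℝ) < 1 - γ := by linarith
    rw [abs_mul]
    have hninv : |(1 / (n : ℝ))| ≤ 1 := by
      rw [abs_of_nonneg (by positivity)]
      rw [div_le_one hn']
      exact_mod_cast hn
    calc |1 / (n:ℝ)| * |∑ k, ∑ s', (Pπ k s s' - Q s s') * V k s'|
        ≤ 1 * |∑ k, ∑ s', (Pπ k s s' - Q s s') * V k s'| :=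
          mul_le_mul_of_nonneg_right hninv (abs_nonneg _)
      _ = |∑ k, ∑ s', (Pπ k s s' - Q s s') * V k s'| := one_mul _
      _ ≤ (∑ s', ∑ k, |Pπ k s s' - Q s s'|) * (1 / (1 - γ)) := by rw [← h2]; exact h1
      _ ≤ κ₁ * (1 / (1 - γ)) :=
          mul_le_mul_of_nonneg_right h3 (by positivity)
      _ = κ₁ / (1 - γ) := by ring
  -- recursive identity for D
  have hDrec : ∀ s, D s = γ * ((1 / (n : ℝ)) * ∑ k, ∑ s', (Pπ k s s' - Q s s') * V k s'
      + ∑ s', Q s s' * D s') := by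
    intro s
    have e1 : (1 / (n : ℝ)) * (∑ k, V k s)
        = (∑ a, π s a * R s a) + γ * ((1 / (n : ℝ)) * ∑ k, ∑ s', Pπ k s s' * V k s') := by
      have : ∑ k, V k s = ∑ k, ((∑ a, π s a * R s a)
          + γ * ∑ s', Pπ k s s' * V k s') := Finset.sum_congr rfl fun k _ => hV k s
      rw [this, Finset.sum_add_distrib, ← Finset.mul_sum]
      have hcard : ∑ _k : Fin n, (∑ a, π s a * R s a) = n * (∑ a, π s a * R s a) := by
        rw [Finset.sum_const]; simp [mul_comm]
      rw [hcard]
      field_simp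
    have e2 : ∑ k, ∑ s', Pπ k s s' * V k s'
        = (∑ k, ∑ s', (Pπ k s s' - Q s s') * V k s') + ∑ k, ∑ s', Q s s' * V k s' := by
      rw [← Finset.sum_add_distrib]
      apply Finset.sum_congr rfl
      intro k _
      rw [← Finset.sum_add_distrib]
      apply Finset.sum_congr rfl
      intro s' _
      ring
    have e3 : (1 / (n : ℝ)) * ∑ k, ∑ s', Q s s' * V k s'
        = ∑ s', Q s s' * ((1 / (n : ℝ)) * ∑ k, V k s') := by
      rw [Finset.sum_comm, Finset.mul_sum]
      apply Finset.sum_congr rfl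
      intro s' _
      rw [← Finset.mul_sum]
      ring
    have e4 : ∑ s', Q s s' * D s'
        = ∑ s', Q s s' * ((1 / (n : ℝ)) * ∑ k, V k s') - ∑ s', Q s s' * VI s' := by
      rw [← Finset.sum_sub_distrib]
      apply Finset.sum_congr rfl
      intro s' _
      simp only [hD]
      ring
    simp only [hD]
    rw [e1, hVI' s, e4, e2, mul_add (1 / (n : ℝ)), e3]
    ring
  -- apply contraction bound to D
  have hDb : ∀ s, |D s| ≤ (γ * κ₁ / (1 - γ)) / (1 - γ) := by
    apply contraction_bound γ (γ * κ₁ / (1 - γ)) hγ0 hγ1 D Q hQ0 hQ1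
    intro s
    have t1 : |(1 / (n : ℝ)) * ∑ k, ∑ s', (Pπ k s s' - Q s s') * V k s'
        + ∑ s', Q s s' * D s'|
        ≤ κ₁ / (1 - γ) + ∑ s', Q s s' * |D s'| := by
      calc |(1 / (n : ℝ)) * ∑ k, ∑ s', (Pπ k s s' - Q s s') * V k s' + ∑ s', Q s s' * D s'|
          ≤ |(1 / (n : ℝ)) * ∑ k, ∑ s', (Pπ k s s' - Q s s') * V k s'|
            + |∑ s', Q s s' * D s'| := abs_add_le _ _
        _ ≤ κ₁ / (1 - γ) + ∑ s', Q s s' * |D s'| := by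
            apply add_le_add (hE s)
            calc |∑ s', Q s s' * D s'| ≤ ∑ s', |Q s s' * D s'| :=
                Finset.abs_sum_le_sum_abs _ _
              _ = ∑ s', Q s s' * |D s'| := Finset.sum_congr rfl fun s' _ => by
                  rw [abs_mul, abs_of_nonneg (hQ0 s s')]
    rw [hDrec s]
    calc |γ * ((1 / (n : ℝ)) * ∑ k, ∑ s', (Pπ k s s' - Q s s') * V k s'
            + ∑ s', Q s s' * D s')|
        = γ * |(1 / (n : ℝ)) * ∑ k, ∑ s', (Pπ k s s' - Q s s') * V k s'
            + ∑ s', Q s s' * D s'| := by rw [abs_mul, abs_of_nonneg hγ0]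
      _ ≤ γ * (κ₁ / (1 - γ) + ∑ s', Q s s' * |D s'|) := mul_le_mul_of_nonneg_left t1 hγ0
      _ = γ * κ₁ / (1 - γ) + γ * ∑ s', Q s s' * |D s'| := by ring
  intro s
  have := hDb s
  have : |D s| ≤ γ * κ₁ / (1 - γ) ^ 2 := by
    have h := hDb s
    have : (γ * κ₁ / (1 - γ)) / (1 - γ) = γ * κ₁ / (1 - γ) ^ 2 := by
      rw [div_div, sq]
    linarith [h, this.le]
  exact this
end

section
/- Let P and P′ be two transition kernels on the same S × A with the same reward function R satisfying 0 ≤ R(s,a) ≤ 1, let π be a policy, and let ε ≥ 0 satisfy Σ_{s′} |P^π(s′|s) − P′^π(s′|s)| ≤ ε for every state s. Then the value functions of π in the two environments satisfy max_{s∈S} |V_P^π(s) − V_{P′}^π(s)| ≤ γε/(1−γ)². -/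
/-!
Both value functions are fixed points of `γ`-contractions in the sup norm. Taking a state where
`|V' s|` is maximal gives `‖V'‖ ≤ 1 + γ‖V'‖`, i.e. `‖V'‖ ≤ 1/(1-γ)`. Subtracting the two Bellman
equations,
`V - V' = γ P^π (V - V') + γ (P^π - P'^π) V'`,
and evaluating at a state where `|V - V'|` is maximal gives
`‖V - V'‖ ≤ γ‖V - V'‖ + γ ε ‖V'‖`, hence `‖V - V'‖ ≤ γ ε / (1-γ)²`.
-/

open Finset

section Averages

variable {ι : Type*} [Fintype ι]

theorem abs_sum_mul_le_sum_abs_mul (w f : ι → ℝ) {B : ℝ} (hf : ∀ i, |f i| ≤ B) :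
    |∑ i, w i * f i| ≤ (∑ i, |w i|) * B := by
  calc |∑ i, w i * f i| ≤ ∑ i, |w i * f i| := abs_sum_le_sum_abs _ _
    _ ≤ ∑ i, |w i| * B := by
        gcongr with i
        rw [abs_mul]
        exact mul_le_mul_of_nonneg_left (hf i) (abs_nonneg _)
    _ = (∑ i, |w i|) * B := (sum_mul _ _ _).symm

theorem abs_sum_mul_le_of_mem_stdSimplex {w : ι → ℝ} (hw : w ∈ stdSimplex ℝ ι) (f : ι → ℝ)
    {B : ℝ} (hf : ∀ i, |f i| ≤ B) : |∑ i, w i * f i| ≤ B := by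
  have hw_abs : ∑ i, |w i| = 1 := by
    rw [← hw.2]
    exact sum_congr rfl fun i _ => abs_of_nonneg (hw.1 i)
  simpa [hw_abs] using abs_sum_mul_le_sum_abs_mul w f hf

theorem sum_mul_mem_stdSimplex {κ : Type*} [Fintype κ] {w : κ → ℝ} (hw : w ∈ stdSimplex ℝ κ)
    {p : κ → ι → ℝ} (hp : ∀ k, p k ∈ stdSimplex ℝ ι) :
    (fun i => ∑ k, w k * p k i) ∈ stdSimplex ℝ ι := by
  have hmem := (convex_stdSimplex ℝ ι).sum_mem (t := univ) (fun k _ => hw.1 k) hw.2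
    (fun k _ => hp k)
  convert hmem using 1
  ext i
  simp only [Finset.sum_apply, Pi.smul_apply, smul_eq_mul]

end Averages

/-- Apply the hypothesis at a maximizer of `|f|`. -/
theorem abs_le_div_one_sub_of_self_bound {S : Type*} [Fintype S] {f : S → ℝ} {c γ : ℝ}
    (hγ1 : γ < 1) (h : ∀ s M, (∀ s', |f s'| ≤ M) → |f s| ≤ c + γ * M) (s : S) :
    |f s| ≤ c / (1 - γ) := by
  obtain ⟨s₀, -, hs₀⟩ := exists_max_image univ (fun s => |f s|) ⟨s, mem_univ s⟩
  have hmax : ∀ s', |f s'| ≤ |f s₀| := fun s' => hs₀ s' (mem_univ s')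
  have hself := h s₀ _ hmax
  calc |f s| ≤ |f s₀| := hmax s
    _ ≤ c / (1 - γ) := by
        rw [le_div_iff₀ (by linarith)]
        linarith

section Bellman

variable {S : Type*} [Fintype S] {γ : ℝ}

def IsBellmanSolution (γ : ℝ) (r : S → ℝ) (Q : S → S → ℝ) (V : S → ℝ) : Prop :=
  ∀ s, V s = r s + γ * ∑ s', Q s s' * V s'

theorem IsBellmanSolution.abs_le {r : S → ℝ} {Q : S → S → ℝ} {V : S → ℝ}
    (hV : IsBellmanSolution γ r Q V) (hγ0 : 0 ≤ γ) (hγ1 : γ < 1)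
    (hQ : ∀ s, Q s ∈ stdSimplex ℝ S) {B : ℝ} (hr : ∀ s, |r s| ≤ B) (s : S) :
    |V s| ≤ B / (1 - γ) := by
  refine abs_le_div_one_sub_of_self_bound hγ1 (fun s M hM => ?_) s
  have hQV := abs_sum_mul_le_of_mem_stdSimplex (hQ s) V hM
  calc |V s| = |r s + γ * ∑ s', Q s s' * V s'| := by rw [← hV s]
    _ ≤ |r s| + |γ * ∑ s', Q s s' * V s'| := abs_add_le _ _
    _ = |r s| + γ * |∑ s', Q s s' * V s'| := by rw [abs_mul, abs_of_nonneg hγ0]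
    _ ≤ B + γ * M := by gcongr; exact hr s

/-- The simulation lemma. -/
theorem IsBellmanSolution.abs_sub_le {r : S → ℝ} {Q Q' : S → S → ℝ} {V V' : S → ℝ}
    (hV : IsBellmanSolution γ r Q V) (hV' : IsBellmanSolution γ r Q' V')
    (hγ0 : 0 ≤ γ) (hγ1 : γ < 1) (hQ : ∀ s, Q s ∈ stdSimplex ℝ S)
    {ε : ℝ} (hε : ∀ s, ∑ s', |Q s s' - Q' s s'| ≤ ε)
    {B : ℝ} (hB0 : 0 ≤ B) (hB : ∀ s, |V' s| ≤ B) (s : S) :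
    |V s - V' s| ≤ γ * (ε * B) / (1 - γ) := by
  refine abs_le_div_one_sub_of_self_bound (f := fun s => V s - V' s) hγ1 (fun s M hM => ?_) s
  have hdiff : V s - V' s =
      γ * (∑ s', Q s s' * (V s' - V' s') + ∑ s', (Q s s' - Q' s s') * V' s') := by
    rw [hV s, hV' s, ← sum_add_distrib]
    simp only [mul_sub, sub_mul, sub_add_sub_cancel, sum_sub_distrib]
    ring
  have hcontract : |∑ s', Q s s' * (V s' - V' s')| ≤ M :=
    abs_sum_mul_le_of_mem_stdSimplex (hQ s) _ hM
  have hperturb : |∑ s', (Q s s' - Q' s s') * V' s'| ≤ ε * B :=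
    (abs_sum_mul_le_sum_abs_mul _ V' hB).trans (mul_le_mul_of_nonneg_right (hε s) hB0)
  calc |V s - V' s| ≤ γ * (|∑ s', Q s s' * (V s' - V' s')|
        + |∑ s', (Q s s' - Q' s s') * V' s'|) := by
        rw [hdiff, abs_mul, abs_of_nonneg hγ0]
        exact mul_le_mul_of_nonneg_left (abs_add_le _ _) hγ0
    _ ≤ γ * (M + ε * B) := by gcongr
    _ = γ * (ε * B) + γ * M := by ring

end Bellman

theorem stmt_3_general {S A : Type*} [Fintype S] [Fintype A]
    (γ : ℝ) (hγ0 : 0 ≤ γ) (hγ1 : γ < 1)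
    (R : S → A → ℝ) (hR0 : ∀ s a, 0 ≤ R s a) (hR1 : ∀ s a, R s a ≤ 1)
    (P P' : S → A → S → ℝ)
    (hPpos : ∀ s a s', 0 ≤ P s a s') (hPsum : ∀ s a, ∑ s', P s a s' = 1)
    (hP'pos : ∀ s a s', 0 ≤ P' s a s') (hP'sum : ∀ s a, ∑ s', P' s a s' = 1)
    (π : S → A → ℝ) (hπpos : ∀ s a, 0 ≤ π s a) (hπsum : ∀ s, ∑ a, π s a = 1)
    (ε : ℝ)
    (hε : ∀ s, ∑ s', |(∑ a, π s a * P s a s') - (∑ a, π s a * P' s a s')| ≤ ε)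
    (V : S → ℝ)
    (hV : ∀ s, V s = (∑ a, π s a * R s a)
        + γ * ∑ s', (∑ a, π s a * P s a s') * V s')
    (V' : S → ℝ)
    (hV' : ∀ s, V' s = (∑ a, π s a * R s a)
        + γ * ∑ s', (∑ a, π s a * P' s a s') * V' s') :
    ∀ s, |V s - V' s| ≤ γ * ε / (1 - γ) ^ 2 := by
  intro s
  have hπ : ∀ s, π s ∈ stdSimplex ℝ A := fun s => ⟨hπpos s, hπsum s⟩
  have hQ : ∀ s, (fun s' => ∑ a, π s a * P s a s') ∈ stdSimplex ℝ S :=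
    fun s => sum_mul_mem_stdSimplex (hπ s) fun a => ⟨hPpos s a, hPsum s a⟩
  have hQ' : ∀ s, (fun s' => ∑ a, π s a * P' s a s') ∈ stdSimplex ℝ S :=
    fun s => sum_mul_mem_stdSimplex (hπ s) fun a => ⟨hP'pos s a, hP'sum s a⟩
  have hr : ∀ s, |∑ a, π s a * R s a| ≤ 1 := fun s =>
    abs_sum_mul_le_of_mem_stdSimplex (hπ s) _ fun a => abs_le.2 ⟨by linarith [hR0 s a], hR1 s a⟩
  have hV'_le : ∀ s, |V' s| ≤ 1 / (1 - γ) := IsBellmanSolution.abs_le hV' hγ0 hγ1 hQ' hr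
  calc |V s - V' s| ≤ γ * (ε * (1 / (1 - γ))) / (1 - γ) :=
        IsBellmanSolution.abs_sub_le hV hV' hγ0 hγ1 hQ hε (one_div_nonneg.2 (by linarith)) hV'_le s
    _ = γ * ε / (1 - γ) ^ 2 := by field_simp

/-- Let `P` and `P'` be two transition kernels on the same `S × A` with the
same reward `R`, `0 ≤ R(s,a) ≤ 1`, let `π` be a policy, and let `ε ≥ 0` satisfy
`∑_{s'} |P^π(s'|s) − P'^π(s'|s)| ≤ ε` for every state `s`. Then the value functions of
`π` in the two environments satisfy `max_s |V_P^π(s) − V_{P'}^π(s)| ≤ γε/(1−γ)²`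
(stated as the bound holding at every state). Value functions are characterized as the
(unique, since `γ < 1`) solutions of the Bellman equations. -/
theorem stmt_3 {S A : Type*} [Fintype S] [Fintype A] [Nonempty S] [Nonempty A]
    (γ : ℝ) (hγ0 : 0 ≤ γ) (hγ1 : γ < 1)
    (R : S → A → ℝ) (hR0 : ∀ s a, 0 ≤ R s a) (hR1 : ∀ s a, R s a ≤ 1)
    (P P' : S → A → S → ℝ)
    (hPpos : ∀ s a s', 0 ≤ P s a s') (hPsum : ∀ s a, ∑ s', P s a s' = 1)
    (hP'pos : ∀ s a s', 0 ≤ P' s a s') (hP'sum : ∀ s a, ∑ s', P' s a s' = 1)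
    (π : S → A → ℝ) (hπpos : ∀ s a, 0 ≤ π s a) (hπsum : ∀ s, ∑ a, π s a = 1)
    (ε : ℝ) (hε0 : 0 ≤ ε)
    (hε : ∀ s, ∑ s', |(∑ a, π s a * P s a s') - (∑ a, π s a * P' s a s')| ≤ ε)
    (V : S → ℝ)
    (hV : ∀ s, V s = (∑ a, π s a * R s a)
        + γ * ∑ s', (∑ a, π s a * P s a s') * V s')
    (V' : S → ℝ)
    (hV' : ∀ s, V' s = (∑ a, π s a * R s a)
        + γ * ∑ s', (∑ a, π s a * P' s a s') * V' s') :
    ∀ s, |V s - V' s| ≤ γ * ε / (1 - γ) ^ 2 :=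
  stmt_3_general γ hγ0 hγ1 R hR0 hR1 P P' hPpos hPsum hP'pos hP'sum π hπpos hπsum ε hε V hV V' hV'
end

section
/- Let Q⋆ be a fixed point of the average Bellman operator T (i.e. T Q⋆ = Q⋆). Let λ ∈ [0,1], let Q¹, …, Qⁿ : S × A → ℝ be arbitrary, set Q̄ = (1/n) Σ_{k=1}^n Q^k and Q̄⁺ = (1−λ) Q̄ + (λ/n) Σ_{k=1}^n T_k Q^k. Then ‖Q̄⁺ − Q⋆‖∞ ≤ (1 − (1−γ)λ) ‖Q̄ − Q⋆‖∞ + (γλ/n) Σ_{k=1}^n ‖Q^k − Q̄‖∞. -/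
/-! Each `Tₖ` is a `γ`-contraction for the sup norm: `Q ↦ (s ↦ maxₐ Q (s, a))` is 1-Lipschitz and
`Pₖ (s, a)` is a probability vector. As `Q⋆` is the average of the `Tₖ Q⋆`, the error splits as
`Q̄⁺ − Q⋆ = (1 − λ) (Q̄ − Q⋆) + (λ/n) ∑ₖ (Tₖ Qᵏ − Tₖ Q⋆)`, and contraction together with
`‖Qᵏ − Q⋆‖ ≤ ‖Qᵏ − Q̄‖ + ‖Q̄ − Q⋆‖` bounds the second part. -/

open Finset

theorem Finset.abs_sup'_sub_sup'_le {α β : Type*} [AddCommGroup β] [LinearOrder β]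
    [IsOrderedAddMonoid β] {s : Finset α} (hs : s.Nonempty) {f g : α → β} {c : β}
    (h : ∀ a ∈ s, |f a - g a| ≤ c) : |s.sup' hs f - s.sup' hs g| ≤ c := by
  rw [abs_sub_le_iff, sub_le_iff_le_add, sub_le_iff_le_add]
  constructor
  · refine sup'_le hs f fun a ha => ?_
    calc f a = (f a - g a) + g a := (sub_add_cancel _ _).symm
      _ ≤ c + s.sup' hs g := add_le_add (le_of_abs_le (h a ha)) (le_sup' g ha)
  · refine sup'_le hs g fun a ha => ?_
    calc g a = (g a - f a) + f a := (sub_add_cancel _ _).symm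
      _ ≤ c + s.sup' hs f :=
        add_le_add (le_of_abs_le (abs_sub_comm (f a) _ ▸ h a ha)) (le_sup' f ha)

theorem abs_sum_mul_le_norm_of_stochastic {ι : Type*} [Fintype ι] {p : ι → ℝ}
    (hp : ∀ i, 0 ≤ p i) (hp1 : ∑ i, p i = 1) (v : ι → ℝ) : |∑ i, p i * v i| ≤ ‖v‖ :=
  calc |∑ i, p i * v i| ≤ ∑ i, p i * ‖v‖ := by
        refine (abs_sum_le_sum_abs _ _).trans (sum_le_sum fun i _ => ?_)
        rw [abs_mul, abs_of_nonneg (hp i)]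
        exact mul_le_mul_of_nonneg_left (by simpa using norm_le_pi_norm v i) (hp i)
    _ = ‖v‖ := by rw [← sum_mul, hp1, one_mul]

section Bellman

variable {S A : Type*} [Fintype S] [Fintype A] [Nonempty A]

def maxAction (Q : S × A → ℝ) (s : S) : ℝ :=
  univ.sup' univ_nonempty fun a => Q (s, a)

def bellmanOp (γ : ℝ) (R : S → A → ℝ) (p : S → A → S → ℝ) (Q : S × A → ℝ) : S × A → ℝ :=
  fun sa => R sa.1 sa.2 + γ * ∑ s', p sa.1 sa.2 s' * maxAction Q s'

theorem norm_maxAction_sub_le (Q₁ Q₂ : S × A → ℝ) :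
    ‖maxAction Q₁ - maxAction Q₂‖ ≤ ‖Q₁ - Q₂‖ :=
  (pi_norm_le_iff_of_nonneg (norm_nonneg _)).2 fun s =>
    Finset.abs_sup'_sub_sup'_le _ fun a _ => by
      simpa using norm_le_pi_norm (Q₁ - Q₂) (s, a)

theorem norm_bellmanOp_sub_le {γ : ℝ} (hγ : 0 ≤ γ) (R : S → A → ℝ) {p : S → A → S → ℝ}
    (hp : ∀ s a s', 0 ≤ p s a s') (hp1 : ∀ s a, ∑ s', p s a s' = 1) (Q₁ Q₂ : S × A → ℝ) :
    ‖bellmanOp γ R p Q₁ - bellmanOp γ R p Q₂‖ ≤ γ * ‖Q₁ - Q₂‖ := by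
  refine (pi_norm_le_iff_of_nonneg (by positivity)).2 fun ⟨s, a⟩ => ?_
  have hdiff : (bellmanOp γ R p Q₁ - bellmanOp γ R p Q₂) (s, a)
      = γ * ∑ s', p s a s' * (maxAction Q₁ - maxAction Q₂) s' := by
    simp only [bellmanOp, Pi.sub_apply, mul_sub, sum_sub_distrib]
    ring
  rw [Real.norm_eq_abs, hdiff, abs_mul, abs_of_nonneg hγ]
  gcongr
  exact (abs_sum_mul_le_norm_of_stochastic (hp s a) (hp1 s a) _).trans
    (norm_maxAction_sub_le Q₁ Q₂)

end Bellman

theorem norm_averaged_step_sub_le {E ι : Type*} [SeminormedAddCommGroup E] [NormedSpace ℝ E]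
    [Fintype ι] [Nonempty ι] {T : ι → E → E} {γ : ℝ} (hγ : 0 ≤ γ)
    (hT : ∀ k x y, ‖T k x - T k y‖ ≤ γ * ‖x - y‖) {xstar : E}
    (hfix : xstar = (Fintype.card ι : ℝ)⁻¹ • ∑ k, T k xstar)
    {lam : ℝ} (hlam0 : 0 ≤ lam) (hlam1 : lam ≤ 1) (x : ι → E) :
    ‖((1 - lam) • (Fintype.card ι : ℝ)⁻¹ • ∑ k, x k
        + (lam / Fintype.card ι) • ∑ k, T k (x k)) - xstar‖
      ≤ (1 - (1 - γ) * lam) * ‖(Fintype.card ι : ℝ)⁻¹ • ∑ k, x k - xstar‖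
        + (γ * lam / Fintype.card ι) * ∑ k, ‖x k - (Fintype.card ι : ℝ)⁻¹ • ∑ k, x k‖ := by
  set N : ℝ := (Fintype.card ι : ℝ)
  set xbar := N⁻¹ • ∑ k, x k
  have hN : N ≠ 0 := by positivity
  have hdecomp : ((1 - lam) • xbar + (lam / N) • ∑ k, T k (x k)) - xstar
      = (1 - lam) • (xbar - xstar) + (lam / N) • ∑ k, (T k (x k) - T k xstar) := by
    have hstar : (lam / N) • ∑ k, T k xstar = lam • xstar := by
      rw [div_eq_mul_inv, mul_smul, ← hfix]
    rw [sum_sub_distrib, smul_sub, smul_sub, hstar]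
    module
  have hterm : ∀ k, ‖T k (x k) - T k xstar‖ ≤ γ * ‖x k - xbar‖ + γ * ‖xbar - xstar‖ := fun k =>
    calc ‖T k (x k) - T k xstar‖ ≤ γ * ‖x k - xstar‖ := hT k _ _
      _ ≤ γ * (‖x k - xbar‖ + ‖xbar - xstar‖) := by
        gcongr
        exact norm_sub_le_norm_sub_add_norm_sub _ _ _
      _ = _ := mul_add _ _ _
  calc ‖((1 - lam) • xbar + (lam / N) • ∑ k, T k (x k)) - xstar‖
      ≤ (1 - lam) * ‖xbar - xstar‖ + (lam / N) * ∑ k, ‖T k (x k) - T k xstar‖ := by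
        rw [hdecomp]
        refine (norm_add_le _ _).trans ?_
        rw [norm_smul_of_nonneg (by linarith), norm_smul_of_nonneg (by positivity)]
        gcongr
        exact norm_sum_le _ _
    _ ≤ (1 - lam) * ‖xbar - xstar‖
        + (lam / N) * ∑ k, (γ * ‖x k - xbar‖ + γ * ‖xbar - xstar‖) := by
        gcongr with k; exact hterm k
    _ = (1 - (1 - γ) * lam) * ‖xbar - xstar‖ + (γ * lam / N) * ∑ k, ‖x k - xbar‖ := by
        rw [sum_add_distrib, sum_const, card_univ, nsmul_eq_mul, ← mul_sum]
        field_simp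
        ring

theorem stmt_6_general {S A : Type*} [Fintype S] [Fintype A] [Nonempty A]
    (γ : ℝ) (hγ0 : 0 ≤ γ)
    (n : ℕ) (hn : 1 ≤ n)
    (R : S → A → ℝ)
    (P : Fin n → S → A → S → ℝ)
    (hPpos : ∀ k s a s', 0 ≤ P k s a s')
    (hPsum : ∀ k s a, ∑ s', P k s a s' = 1)
    (Tk : Fin n → (S × A → ℝ) → (S × A → ℝ))
    (hTk : ∀ k Q sa, Tk k Q sa = R sa.1 sa.2
        + γ * ∑ s', P k sa.1 sa.2 s' *
          (Finset.univ.sup' Finset.univ_nonempty fun a' => Q (s', a')))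
    (Qstar : S × A → ℝ)
    (hfix : ∀ sa, Qstar sa = (1 / (n : ℝ)) * ∑ k, Tk k Qstar sa)
    (lam : ℝ) (hlam0 : 0 ≤ lam) (hlam1 : lam ≤ 1)
    (Q : Fin n → S × A → ℝ)
    (Qbar : S × A → ℝ) (hQbar : Qbar = (1 / (n : ℝ)) • ∑ k, Q k)
    (Qbarp : S × A → ℝ)
    (hQbarp : Qbarp = (1 - lam) • Qbar + (lam / (n : ℝ)) • ∑ k, Tk k (Q k)) :
    ‖Qbarp - Qstar‖ ≤ (1 - (1 - γ) * lam) * ‖Qbar - Qstar‖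
      + (γ * lam / (n : ℝ)) * ∑ k, ‖Q k - Qbar‖ := by
  have : Nonempty (Fin n) := ⟨⟨0, hn⟩⟩
  have hTk_eq : Tk = fun k => bellmanOp γ R (P k) := by
    funext k Q sa
    exact hTk k Q sa
  have hfix_avg : Qstar = (Fintype.card (Fin n) : ℝ)⁻¹ • ∑ k, Tk k Qstar := by
    funext sa
    simpa [Finset.sum_apply] using hfix sa
  subst hTk_eq hQbar hQbarp
  simpa [one_div] using norm_averaged_step_sub_le hγ0
    (fun k => norm_bellmanOp_sub_le hγ0 R (hPpos k) (hPsum k)) hfix_avg hlam0 hlam1 Q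

/-- One-step recursion lemma for QAvg. Let `Q⋆` be a fixed point of the
average Bellman operator `T Q = (1/n) ∑ₖ Tₖ Q`. Let `λ ∈ [0,1]`, `Q¹, …, Qⁿ` arbitrary,
`Q̄ = (1/n) ∑ₖ Qᵏ` and `Q̄⁺ = (1−λ) Q̄ + (λ/n) ∑ₖ Tₖ Qᵏ`. Then
`‖Q̄⁺ − Q⋆‖∞ ≤ (1 − (1−γ)λ) ‖Q̄ − Q⋆‖∞ + (γλ/n) ∑ₖ ‖Qᵏ − Q̄‖∞`
(the norm on the finite pi type `S × A → ℝ` is the maximum norm). -/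
theorem stmt_6 {S A : Type*} [Fintype S] [Fintype A] [Nonempty S] [Nonempty A]
    (γ : ℝ) (hγ0 : 0 ≤ γ) (hγ1 : γ < 1)
    (n : ℕ) (hn : 1 ≤ n)
    (R : S → A → ℝ)
    (P : Fin n → S → A → S → ℝ)
    (hPpos : ∀ k s a s', 0 ≤ P k s a s')
    (hPsum : ∀ k s a, ∑ s', P k s a s' = 1)
    (Tk : Fin n → (S × A → ℝ) → (S × A → ℝ))
    (hTk : ∀ k Q sa, Tk k Q sa = R sa.1 sa.2
        + γ * ∑ s', P k sa.1 sa.2 s' *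
          (Finset.univ.sup' Finset.univ_nonempty fun a' => Q (s', a')))
    (Qstar : S × A → ℝ)
    (hfix : ∀ sa, Qstar sa = (1 / (n : ℝ)) * ∑ k, Tk k Qstar sa)
    (lam : ℝ) (hlam0 : 0 ≤ lam) (hlam1 : lam ≤ 1)
    (Q : Fin n → S × A → ℝ)
    (Qbar : S × A → ℝ) (hQbar : Qbar = (1 / (n : ℝ)) • ∑ k, Q k)
    (Qbarp : S × A → ℝ)
    (hQbarp : Qbarp = (1 - lam) • Qbar + (lam / (n : ℝ)) • ∑ k, Tk k (Q k)) :
    ‖Qbarp - Qstar‖ ≤ (1 - (1 - γ) * lam) * ‖Qbar - Qstar‖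
      + (γ * lam / (n : ℝ)) * ∑ k, ‖Q k - Qbar‖ :=
  stmt_6_general γ hγ0 n hn R P hPpos hPsum Tk hTk Qstar hfix lam hlam0 hlam1 Q Qbar hQbar Qbarp
    hQbarp
end

section
/- Assume 0 ≤ R(s,a) ≤ 1 for all s, a. Let E ≥ 1 be an integer, let λ_t ∈ [0,1] for all t ∈ ℕ, and define the QAvg iterates: Q₀^k = Q₀ for all k, where Q₀ : S × A → ℝ takes values in [0, 1/(1−γ)]; for each t, set Q̃_{t+1}^k = (1−λ_t) Q_t^k + λ_t T_k Q_t^k, and let Q_{t+1}^k = (1/n) Σ_{j=1}^n Q̃_{t+1}^j if E divides t+1, and Q_{t+1}^k = Q̃_{t+1}^k otherwise. Write Q̄_t = (1/n) Σ_{k=1}^n Q_t^k. If the step sizes satisfy λ_{t′} ≤ 2λ_t whenever t′ ≤ t and t − t′ ≤ E − 1, then for every t, (1/n) Σ_{k=1}^n ‖Q_t^k − Q̄_t‖∞ ≤ 4 λ_t (E−1)/(1−γ). -/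
open Finset

/-- Value-variance lemma for QAvg. With rewards in `[0,1]`, step sizes
`λ_t ∈ [0,1]` satisfying `λ_{t'} ≤ 2 λ_t` whenever `t' ≤ t` and `t − t' ≤ E − 1`, and
the QAvg iterates (local Bellman update with step `λ_t`, aggregation every `E` steps,
common initialization `Q₀` with values in `[0, 1/(1−γ)]`), the dispersion of the local
Q functions satisfies `(1/n) ∑ₖ ‖Q_t^k − Q̄_t‖∞ ≤ 4 λ_t (E−1)/(1−γ)` for every `t`
(the norm on the finite pi type `S × A → ℝ` is the maximum norm). -/
theorem stmt_7 {S A : Type*} [Fintype S] [Fintype A] [Nonempty S] [Nonempty A]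
    (γ : ℝ) (hγ0 : 0 ≤ γ) (hγ1 : γ < 1)
    (n : ℕ) (hn : 1 ≤ n)
    (R : S → A → ℝ) (hR0 : ∀ s a, 0 ≤ R s a) (hR1 : ∀ s a, R s a ≤ 1)
    (P : Fin n → S → A → S → ℝ)
    (hPpos : ∀ k s a s', 0 ≤ P k s a s')
    (hPsum : ∀ k s a, ∑ s', P k s a s' = 1)
    (Tk : Fin n → (S × A → ℝ) → (S × A → ℝ))
    (hTk : ∀ k Q sa, Tk k Q sa = R sa.1 sa.2
        + γ * ∑ s', P k sa.1 sa.2 s' *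
          (Finset.univ.sup' Finset.univ_nonempty fun a' => Q (s', a')))
    (E : ℕ) (hE : 1 ≤ E)
    (lam : ℕ → ℝ) (hlam : ∀ t, 0 ≤ lam t ∧ lam t ≤ 1)
    (hstep : ∀ t' t : ℕ, t' ≤ t → t - t' ≤ E - 1 → lam t' ≤ 2 * lam t)
    (Q₀ : S × A → ℝ) (hQ₀ : ∀ sa, Q₀ sa ∈ Set.Icc (0 : ℝ) (1 / (1 - γ)))
    (Q : ℕ → Fin n → S × A → ℝ)
    (hQinit : ∀ k, Q 0 k = Q₀)
    (hQupd : ∀ t k, Q (t + 1) k =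
      if E ∣ (t + 1) then
        (1 / (n : ℝ)) • ∑ j, ((1 - lam t) • Q t j + lam t • Tk j (Q t j))
      else
        (1 - lam t) • Q t k + lam t • Tk k (Q t k))
    (Qbar : ℕ → S × A → ℝ) (hQbar : ∀ t, Qbar t = (1 / (n : ℝ)) • ∑ k, Q t k) :
    ∀ t, (1 / (n : ℝ)) * ∑ k, ‖Q t k - Qbar t‖
      ≤ 4 * lam t * ((E : ℝ) - 1) / (1 - γ) := by
  have hγ : (0:ℝ) < 1 - γ := by linarith
  set M : ℝ := 1 / (1 - γ) with hM
  have hMpos : 0 < M := by positivity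
  have hnpos : (0:ℝ) < n := by exact_mod_cast hn
  have hnne : (n:ℝ) ≠ 0 := ne_of_gt hnpos
  -- T_k maps [0,M]-valued functions to [0,M]-valued functions
  have hT : ∀ k (f : S × A → ℝ), (∀ sa, f sa ∈ Set.Icc (0:ℝ) M) →
      ∀ sa, Tk k f sa ∈ Set.Icc (0:ℝ) M := by
    intro k f hf sa
    rw [hTk]
    have h1 : 0 ≤ ∑ s', P k sa.1 sa.2 s' *
        (Finset.univ.sup' Finset.univ_nonempty fun a' => f (s', a')) := by
      apply Finset.sum_nonneg
      intro s' _
      refine mul_nonneg (hPpos _ _ _ _) ?_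
      obtain ⟨a⟩ := (inferInstance : Nonempty A)
      exact le_trans (hf (s', a)).1 (Finset.le_sup' (fun a' => f (s', a')) (mem_univ a))
    have h2 : ∑ s', P k sa.1 sa.2 s' *
        (Finset.univ.sup' Finset.univ_nonempty fun a' => f (s', a')) ≤ M := by
      calc ∑ s', P k sa.1 sa.2 s' *
            (Finset.univ.sup' Finset.univ_nonempty fun a' => f (s', a'))
          ≤ ∑ s', P k sa.1 sa.2 s' * M := by
            refine Finset.sum_le_sum fun s' _ => ?_
            exact mul_le_mul_of_nonneg_left
              (Finset.sup'_le _ _ fun a _ => (hf (s', a)).2) (hPpos _ _ _ _)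
        _ = M := by rw [← Finset.sum_mul, hPsum, one_mul]
    constructor
    · have := hR0 sa.1 sa.2
      have := mul_nonneg hγ0 h1
      linarith
    · have hMeq : 1 + γ * M = M := by
        rw [hM]; field_simp; ring
      have := hR1 sa.1 sa.2
      have := mul_le_mul_of_nonneg_left h2 hγ0
      linarith
  -- convex combinations stay in [0,M]
  have hconv : ∀ (t:ℕ) (x y : ℝ), x ∈ Set.Icc (0:ℝ) M → y ∈ Set.Icc (0:ℝ) M →
      (1 - lam t) * x + lam t * y ∈ Set.Icc (0:ℝ) M := by
    intro t x y hx hy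
    obtain ⟨h0, h1⟩ := hlam t
    constructor
    · nlinarith [hx.1, hy.1]
    · nlinarith [hx.2, hy.2]
  -- the "tilde" update
  have htilmem : ∀ t, (∀ k sa, Q t k sa ∈ Set.Icc (0:ℝ) M) → ∀ k sa,
      ((1 - lam t) • Q t k + lam t • Tk k (Q t k)) sa ∈ Set.Icc (0:ℝ) M := by
    intro t ih k sa
    simp only [Pi.add_apply, Pi.smul_apply, smul_eq_mul]
    exact hconv t _ _ (ih k sa) (hT k _ (ih k) sa)
  -- averages of [0,M]-valued families stay in [0,M]
  have havg : ∀ (g : Fin n → S × A → ℝ), (∀ j sa, g j sa ∈ Set.Icc (0:ℝ) M) →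
      ∀ sa, ((1 / (n:ℝ)) • ∑ j, g j) sa ∈ Set.Icc (0:ℝ) M := by
    intro g hg sa
    simp only [Pi.smul_apply, Finset.sum_apply, smul_eq_mul]
    constructor
    · exact mul_nonneg (by positivity) (Finset.sum_nonneg fun j _ => (hg j sa).1)
    · have hsum : ∑ j, g j sa ≤ n * M := by
        calc ∑ j, g j sa ≤ ∑ _j : Fin n, M := Finset.sum_le_sum fun j _ => (hg j sa).2
          _ = n * M := by simp [Finset.sum_const, mul_comm]
      calc (1/(n:ℝ)) * ∑ j, g j sa ≤ (1/(n:ℝ)) * (n*M) :=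
            mul_le_mul_of_nonneg_left hsum (by positivity)
        _ = M := by field_simp
  -- invariance
  have hinv : ∀ t k sa, Q t k sa ∈ Set.Icc (0:ℝ) M := by
    intro t
    induction t with
    | zero => intro k sa; rw [hQinit]; exact hQ₀ sa
    | succ t ih =>
      intro k sa
      rw [hQupd]
      split_ifs
      · exact havg _ (htilmem t ih) sa
      · exact htilmem t ih k sa
  -- norm bound for differences of [0,M]-valued functions
  have hnormb : ∀ (f g : S × A → ℝ), (∀ sa, f sa ∈ Set.Icc (0:ℝ) M) →
      (∀ sa, g sa ∈ Set.Icc (0:ℝ) M) → ‖f - g‖ ≤ M := by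
    intro f g hf hg
    refine (pi_norm_le_iff_of_nonneg hMpos.le).mpr fun sa => ?_
    rw [Pi.sub_apply, Real.norm_eq_abs, abs_sub_le_iff]
    constructor
    · linarith [(hf sa).2, (hg sa).1]
    · linarith [(hg sa).2, (hf sa).1]
  -- main induction : dispersion bounded by sum of step sizes since last aggregation
  have hmain : ∀ t, (1 / (n : ℝ)) * ∑ k, ‖Q t k - Qbar t‖
      ≤ M * ∑ s ∈ Finset.Ico (E * (t / E)) t, lam s := by
    intro t
    induction t with
    | zero =>
      simp only [Nat.zero_div, Nat.mul_zero, Finset.Ico_self, Finset.sum_empty, mul_zero]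
      have hb : Qbar 0 = Q₀ := by
        rw [hQbar]
        funext sa
        simp only [Pi.smul_apply, Finset.sum_apply, smul_eq_mul, hQinit]
        rw [Finset.sum_const]
        simp [Finset.card_univ]
        field_simp
      have : ∀ k, Q 0 k - Qbar 0 = 0 := by
        intro k; rw [hQinit, hb, sub_self]
      simp [this]
    | succ t ih =>
      by_cases hd : E ∣ (t+1)
      · -- aggregation step: all local iterates agree, dispersion is 0
        have hsame : ∀ k, Q (t+1) k =
            (1 / (n : ℝ)) • ∑ j, ((1 - lam t) • Q t j + lam t • Tk j (Q t j)) := by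
          intro k; rw [hQupd, if_pos hd]
        have hb : Qbar (t+1) = Q (t+1) ⟨0, hn⟩ := by
          rw [hQbar]
          funext sa
          simp only [Pi.smul_apply, Finset.sum_apply, smul_eq_mul]
          have : ∀ k : Fin n, Q (t+1) k sa = Q (t+1) ⟨0, hn⟩ sa := by
            intro k; rw [hsame, hsame]
          rw [Finset.sum_congr rfl fun k _ => this k, Finset.sum_const]
          simp [Finset.card_univ]
          field_simp
        have hzero : ∀ k, Q (t+1) k - Qbar (t+1) = 0 := by
          intro k
          rw [hb, hsame k, hsame ⟨0, hn⟩, sub_self]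
        have hLHS : (1 / (n : ℝ)) * ∑ k, ‖Q (t+1) k - Qbar (t+1)‖ = 0 := by
          simp [hzero]
        rw [hLHS]
        exact mul_nonneg hMpos.le (Finset.sum_nonneg fun s _ => (hlam s).1)
      · -- local step
        have hdiv : (t+1) / E = t / E := by
          rw [Nat.succ_div, if_neg hd, Nat.add_zero]
        have hle : E * (t / E) ≤ t := Nat.mul_div_le t E
        rw [hdiv, Finset.sum_Ico_succ_top hle, mul_add]
        -- the recursion
        set G : S × A → ℝ := (1 / (n : ℝ)) • ∑ j, Tk j (Q t j) with hG
        have hGmem : ∀ sa, G sa ∈ Set.Icc (0:ℝ) M :=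
          havg _ (fun j sa => hT j _ (hinv t j) sa)
        have hbar1 : Qbar (t+1) = (1 - lam t) • Qbar t + lam t • G := by
          rw [hQbar, hQbar, hG]
          funext sa
          simp only [Pi.add_apply, Pi.smul_apply, Finset.sum_apply, smul_eq_mul]
          have : ∀ k : Fin n, Q (t+1) k sa
              = (1 - lam t) * Q t k sa + lam t * Tk k (Q t k) sa := by
            intro k
            rw [hQupd, if_neg hd]
            simp [smul_eq_mul]
          rw [Finset.sum_congr rfl fun k _ => this k, Finset.sum_add_distrib,
            ← Finset.mul_sum, ← Finset.mul_sum]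
          ring
        have hdiffeq : ∀ k, Q (t+1) k - Qbar (t+1)
            = (1 - lam t) • (Q t k - Qbar t) + lam t • (Tk k (Q t k) - G) := by
          intro k
          rw [hQupd, if_neg hd, hbar1]
          funext sa
          simp only [Pi.add_apply, Pi.sub_apply, Pi.smul_apply, smul_eq_mul]
          ring
        have hnk : ∀ k, ‖Q (t+1) k - Qbar (t+1)‖
            ≤ (1 - lam t) * ‖Q t k - Qbar t‖ + lam t * M := by
          intro k
          rw [hdiffeq k]
          obtain ⟨hl0, hl1⟩ := hlam t
          calc ‖(1 - lam t) • (Q t k - Qbar t) + lam t • (Tk k (Q t k) - G)‖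
              ≤ ‖(1 - lam t) • (Q t k - Qbar t)‖ + ‖lam t • (Tk k (Q t k) - G)‖ :=
                norm_add_le _ _
            _ = (1 - lam t) * ‖Q t k - Qbar t‖ + lam t * ‖Tk k (Q t k) - G‖ := by
                rw [norm_smul, norm_smul, Real.norm_eq_abs, Real.norm_eq_abs,
                  abs_of_nonneg (by linarith), abs_of_nonneg hl0]
            _ ≤ (1 - lam t) * ‖Q t k - Qbar t‖ + lam t * M := by
                have := hnormb _ _ (hT k _ (hinv t k)) hGmem
                nlinarith
        have hsum : ∑ k, ‖Q (t+1) k - Qbar (t+1)‖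
            ≤ (1 - lam t) * ∑ k, ‖Q t k - Qbar t‖ + n * (lam t * M) := by
          calc ∑ k, ‖Q (t+1) k - Qbar (t+1)‖
              ≤ ∑ k, ((1 - lam t) * ‖Q t k - Qbar t‖ + lam t * M) :=
                Finset.sum_le_sum fun k _ => hnk k
            _ = (1 - lam t) * ∑ k, ‖Q t k - Qbar t‖ + n * (lam t * M) := by
                rw [Finset.sum_add_distrib, ← Finset.mul_sum, Finset.sum_const]
                simp [Finset.card_univ]
        obtain ⟨hl0, hl1⟩ := hlam t
        have hDnn : 0 ≤ (1 / (n : ℝ)) * ∑ k, ‖Q t k - Qbar t‖ := by positivity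
        have h1 : (1 / (n : ℝ)) * ∑ k, ‖Q (t+1) k - Qbar (t+1)‖
            ≤ (1 - lam t) * ((1 / (n : ℝ)) * ∑ k, ‖Q t k - Qbar t‖) + lam t * M := by
          have := mul_le_mul_of_nonneg_left hsum (by positivity : (0:ℝ) ≤ 1/(n:ℝ))
          calc (1 / (n : ℝ)) * ∑ k, ‖Q (t+1) k - Qbar (t+1)‖
              ≤ (1 / (n : ℝ)) * ((1 - lam t) * ∑ k, ‖Q t k - Qbar t‖ + n * (lam t * M)) :=
                this
            _ = (1 - lam t) * ((1 / (n : ℝ)) * ∑ k, ‖Q t k - Qbar t‖) + lam t * M := by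
                field_simp
        have h2 : (1 - lam t) * ((1 / (n : ℝ)) * ∑ k, ‖Q t k - Qbar t‖)
            ≤ (1 / (n : ℝ)) * ∑ k, ‖Q t k - Qbar t‖ := by nlinarith
        calc (1 / (n : ℝ)) * ∑ k, ‖Q (t+1) k - Qbar (t+1)‖
            ≤ (1 / (n : ℝ)) * ∑ k, ‖Q t k - Qbar t‖ + lam t * M := by linarith
          _ ≤ M * ∑ s ∈ Finset.Ico (E * (t / E)) t, lam s + M * lam t := by
              have := ih; linarith [mul_comm (lam t) M]
  -- finish
  intro t
  set a := E * (t / E) with ha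
  have hle : a ≤ t := Nat.mul_div_le t E
  have hmod : t - a = t % E := by
    have := Nat.mod_add_div t E
    omega
  have hmodlt : t % E ≤ E - 1 := by
    have : t % E < E := Nat.mod_lt t (by omega)
    omega
  have hbound : ∀ s ∈ Finset.Ico a t, lam s ≤ 2 * lam t := by
    intro s hs
    rw [Finset.mem_Ico] at hs
    refine hstep s t (le_of_lt hs.2) ?_
    have h1 : t - s ≤ t - a := Nat.sub_le_sub_left hs.1 t
    omega
  have hsum2 : ∑ s ∈ Finset.Ico a t, lam s ≤ (t - a : ℕ) * (2 * lam t) := by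
    calc ∑ s ∈ Finset.Ico a t, lam s ≤ ∑ _s ∈ Finset.Ico a t, (2 * lam t) :=
          Finset.sum_le_sum hbound
      _ = (t - a : ℕ) * (2 * lam t) := by
          rw [Finset.sum_const, Nat.card_Ico]
          simp
  have hcast : ((t - a : ℕ) : ℝ) ≤ (E : ℝ) - 1 := by
    have h1 : (t - a : ℕ) ≤ E - 1 := by omega
    have h2 : ((t - a : ℕ) : ℝ) ≤ ((E - 1 : ℕ) : ℝ) := by exact_mod_cast h1
    have h3 : ((E - 1 : ℕ) : ℝ) = (E : ℝ) - 1 := by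
      rw [Nat.cast_sub hE]; simp
    linarith
  obtain ⟨hl0, _⟩ := hlam t
  have hE1 : (0:ℝ) ≤ (E:ℝ) - 1 := by
    have : (1:ℝ) ≤ (E:ℝ) := by exact_mod_cast hE
    linarith
  have key : M * ∑ s ∈ Finset.Ico a t, lam s ≤ 4 * lam t * ((E : ℝ) - 1) / (1 - γ) := by
    have h4 : M * ∑ s ∈ Finset.Ico a t, lam s ≤ M * ((t - a : ℕ) * (2 * lam t)) :=
      mul_le_mul_of_nonneg_left hsum2 hMpos.le
    have h5 : M * ((t - a : ℕ) * (2 * lam t)) ≤ M * (((E:ℝ) - 1) * (2 * lam t)) := by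
      refine mul_le_mul_of_nonneg_left ?_ hMpos.le
      exact mul_le_mul_of_nonneg_right hcast (by linarith)
    have h6 : 4 * lam t * ((E : ℝ) - 1) / (1 - γ) = M * (((E:ℝ) - 1) * (4 * lam t)) := by
      rw [hM]; field_simp
    rw [h6]
    have h7 : M * (((E:ℝ) - 1) * (2 * lam t)) ≤ M * (((E:ℝ) - 1) * (4 * lam t)) := by
      refine mul_le_mul_of_nonneg_left ?_ hMpos.le
      refine mul_le_mul_of_nonneg_left (by linarith) hE1
    linarith
  exact le_trans (hmain t) key
end

section
/- Let γ ∈ [0,1), C ≥ 0, and β ≥ 2 be real numbers, and set λ_t = 2/((1−γ)(t+β)) and ζ = 4C/(1−γ)². Let (Δ_t)_{t∈ℕ} be a sequence of nonnegative reals with Δ₀ ≤ ζ/β and Δ_{t+1} ≤ (1 − (1−γ)λ_t) Δ_t + C λ_t² for all t ∈ ℕ. Then Δ_t ≤ ζ/(t+β) for all t ∈ ℕ. -/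
/-! The step size is chosen so that the recursion reads
`Δ_{t+1} ≤ (1 - 2/a) Δ_t + ζ/a²` with `a = t + β`. If `Δ_t ≤ ζ/a`, the right-hand side is
`ζ (a - 1)/a² ≤ ζ/(a + 1)`, because `(a - 1)(a + 1) ≤ a²`; induction on `t` finishes. -/

lemma one_sub_two_div_mul_add_le {a x ζ : ℝ} (ha : 2 ≤ a) (hζ : 0 ≤ ζ) (hx : x ≤ ζ / a) :
    (1 - 2 / a) * x + ζ / a ^ 2 ≤ ζ / (a + 1) := by
  have ha0 : 0 < a := by linarith
  have hcoef : 0 ≤ 1 - 2 / a := by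
    rw [sub_nonneg, div_le_one ha0]; exact ha
  calc (1 - 2 / a) * x + ζ / a ^ 2
      ≤ (1 - 2 / a) * (ζ / a) + ζ / a ^ 2 := by gcongr
    _ = ζ * (a - 1) / a ^ 2 := by field_simp; ring
    _ ≤ ζ / (a + 1) := by
      rw [div_le_div_iff₀ (by positivity) (by linarith)]
      nlinarith

lemma le_div_add_of_le_one_sub_two_div {β ζ : ℝ} {u : ℕ → ℝ} (hβ : 2 ≤ β) (hζ : 0 ≤ ζ)
    (h0 : u 0 ≤ ζ / β)
    (hu : ∀ t : ℕ, u (t + 1) ≤ (1 - 2 / (t + β)) * u t + ζ / (t + β) ^ 2) :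
    ∀ t : ℕ, u t ≤ ζ / (t + β) := by
  intro t
  induction t with
  | zero => simpa using h0
  | succ t ih =>
    have ha : 2 ≤ (t : ℝ) + β := by linarith [t.cast_nonneg (α := ℝ)]
    calc u (t + 1) ≤ (1 - 2 / (t + β)) * u t + ζ / (t + β) ^ 2 := hu t
      _ ≤ ζ / (t + β + 1) := one_sub_two_div_mul_add_le ha hζ ih
      _ = ζ / ((t + 1 : ℕ) + β) := by push_cast; ring_nf

theorem stmt_9_general (γ C β : ℝ) (hγ1 : γ < 1) (hC : 0 ≤ C) (hβ : 2 ≤ β)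
    (lam : ℕ → ℝ) (hlam : ∀ t : ℕ, lam t = 2 / ((1 - γ) * ((t : ℝ) + β)))
    (ζ : ℝ) (hζ : ζ = 4 * C / (1 - γ) ^ 2)
    (Δ : ℕ → ℝ) (hinit : Δ 0 ≤ ζ / β)
    (hrec : ∀ t : ℕ, Δ (t + 1) ≤ (1 - (1 - γ) * lam t) * Δ t + C * (lam t) ^ 2) :
    ∀ t : ℕ, Δ t ≤ ζ / ((t : ℝ) + β) := by
  have hγ : 1 - γ ≠ 0 := by linarith
  refine le_div_add_of_le_one_sub_two_div hβ (by rw [hζ]; positivity) hinit fun t => ?_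
  have ha : (t : ℝ) + β ≠ 0 := by linarith [t.cast_nonneg (α := ℝ)]
  have hcontr : (1 - γ) * lam t = 2 / (t + β) := by
    rw [hlam]; field_simp
  have hnoise : C * lam t ^ 2 = ζ / (t + β) ^ 2 := by
    rw [hlam, hζ]; field_simp; ring
  simpa only [hcontr, hnoise] using hrec t

/-- Scalar recursion lemma. Let `γ ∈ [0,1)`, `C ≥ 0`, `β ≥ 2`,
`λ_t = 2/((1−γ)(t+β))`, `ζ = 4C/(1−γ)²`. If `(Δ_t)` is a sequence of nonnegative
reals with `Δ₀ ≤ ζ/β` and `Δ_{t+1} ≤ (1 − (1−γ)λ_t)Δ_t + Cλ_t²`, then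
`Δ_t ≤ ζ/(t+β)` for all `t`. -/
theorem stmt_9 (γ C β : ℝ) (hγ0 : 0 ≤ γ) (hγ1 : γ < 1) (hC : 0 ≤ C) (hβ : 2 ≤ β)
    (lam : ℕ → ℝ) (hlam : ∀ t : ℕ, lam t = 2 / ((1 - γ) * ((t : ℝ) + β)))
    (ζ : ℝ) (hζ : ζ = 4 * C / (1 - γ) ^ 2)
    (Δ : ℕ → ℝ) (hΔpos : ∀ t, 0 ≤ Δ t) (hinit : Δ 0 ≤ ζ / β)
    (hrec : ∀ t : ℕ, Δ (t + 1) ≤ (1 - (1 - γ) * lam t) * Δ t + C * (lam t) ^ 2) :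
    ∀ t : ℕ, Δ t ≤ ζ / ((t : ℝ) + β) :=
  stmt_9_general γ C β hγ1 hC hβ lam hlam ζ hζ Δ hinit hrec
end

section
/- Let H be a real inner product space, n ≥ 1, B ≥ 0, E ≥ 1 an integer, and let t₀ ≤ t be natural numbers with t − t₀ ≤ E − 1. Let η : ℕ → ℝ≥0 be step sizes with η_{t′} ≤ 2η_t for all t′ with t₀ ≤ t′ ≤ t − 1. Let c ∈ H, and for k = 1, …, n let g_{t′}^k ∈ H satisfy ‖g_{t′}^k‖ ≤ B for all t₀ ≤ t′ ≤ t − 1; define x_t^k = c + Σ_{t′=t₀}^{t−1} η_{t′} g_{t′}^k and x̄_t = (1/n) Σ_{k=1}^n x_t^k. Then (1/n) Σ_{k=1}^n ‖x_t^k − x̄_t‖² ≤ 4 η_t² (E−1)² B². -/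
open Finset

lemma stmt_12_variance {H : Type*} [NormedAddCommGroup H] [InnerProductSpace ℝ H]
    {n : ℕ} (hn : 1 ≤ n) (y : Fin n → H) :
    ∑ k, ‖y k - (1 / (n : ℝ)) • ∑ j, y j‖ ^ 2 ≤ ∑ k, ‖y k‖ ^ 2 := by
  have hn0 : (n : ℝ) ≠ 0 := by positivity
  set ybar : H := (1 / (n : ℝ)) • ∑ j, y j with hybar
  have hsum : ∑ j, y j = (n : ℝ) • ybar := by
    rw [hybar, smul_smul]; field_simp; rw [one_smul]
  have hexp : ∀ k : Fin n, ‖y k - ybar‖ ^ 2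
      = ‖y k‖ ^ 2 - 2 * inner ℝ (y k) ybar + ‖ybar‖ ^ 2 := by
    intro k
    rw [← real_inner_self_eq_norm_sq, ← real_inner_self_eq_norm_sq,
      ← real_inner_self_eq_norm_sq, inner_sub_sub_self]
    ring_nf
    rw [real_inner_comm ybar (y k)]
    ring
  calc ∑ k, ‖y k - ybar‖ ^ 2
      = ∑ k, ‖y k‖ ^ 2 - 2 * ((n : ℝ) * ‖ybar‖ ^ 2) + (n : ℝ) * ‖ybar‖ ^ 2 := by
        simp only [hexp]
        rw [Finset.sum_add_distrib, Finset.sum_sub_distrib, ← Finset.mul_sum,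
          ← sum_inner, hsum, real_inner_smul_left, real_inner_self_eq_norm_sq]
        simp [Finset.card_univ]
    _ ≤ ∑ k, ‖y k‖ ^ 2 := by
        have : (0 : ℝ) ≤ (n : ℝ) * ‖ybar‖ ^ 2 := by positivity
        linarith

/-- Policy-variance lemma for PAvg. In a real inner product space `H`,
with `n ≥ 1`, `B ≥ 0`, integer `E ≥ 1`, naturals `t₀ ≤ t` with `t − t₀ ≤ E − 1`,
nonnegative step sizes with `η_{t'} ≤ 2 η_t` for `t₀ ≤ t' ≤ t − 1`, a common point
`c ∈ H`, and directions `g_{t'}^k` of norm at most `B` for `t₀ ≤ t' ≤ t − 1`, the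
iterates `x_t^k = c + ∑_{t'=t₀}^{t−1} η_{t'} g_{t'}^k` and their mean
`x̄_t = (1/n) ∑ₖ x_t^k` satisfy `(1/n) ∑ₖ ‖x_t^k − x̄_t‖² ≤ 4 η_t² (E−1)² B²`. -/
theorem stmt_12 {H : Type*} [NormedAddCommGroup H] [InnerProductSpace ℝ H]
    (n : ℕ) (hn : 1 ≤ n) (B : ℝ) (hB : 0 ≤ B) (E : ℕ) (hE : 1 ≤ E)
    (t₀ t : ℕ) (ht : t₀ ≤ t) (htE : t - t₀ ≤ E - 1)
    (η : ℕ → ℝ) (hηpos : ∀ u, 0 ≤ η u)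
    (hηstep : ∀ t', t₀ ≤ t' → t' ≤ t - 1 → η t' ≤ 2 * η t)
    (c : H) (g : ℕ → Fin n → H)
    (hg : ∀ t' k, t₀ ≤ t' → t' ≤ t - 1 → ‖g t' k‖ ≤ B)
    (x : Fin n → H) (hx : ∀ k, x k = c + ∑ t' ∈ Finset.Ico t₀ t, η t' • g t' k)
    (xbar : H) (hxbar : xbar = (1 / (n : ℝ)) • ∑ k, x k) :
    (1 / (n : ℝ)) * ∑ k, ‖x k - xbar‖ ^ 2
      ≤ 4 * (η t) ^ 2 * ((E : ℝ) - 1) ^ 2 * B ^ 2 := by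
  have hn0 : (n : ℝ) ≠ 0 := by positivity
  have hηt : 0 ≤ η t := hηpos t
  -- bound on each deviation from c
  set M : ℝ := 2 * η t * ((E : ℝ) - 1) * B with hM
  have hM0 : 0 ≤ M := by
    have hE1 : (1 : ℝ) ≤ (E : ℝ) := by exact_mod_cast hE
    have : (0:ℝ) ≤ (E : ℝ) - 1 := by linarith
    positivity
  have hdev : ∀ k : Fin n, ‖x k - c‖ ≤ M := by
    intro k
    rw [hx k]
    have h1 : c + ∑ t' ∈ Finset.Ico t₀ t, η t' • g t' k - c
        = ∑ t' ∈ Finset.Ico t₀ t, η t' • g t' k := by abel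
    rw [h1]
    calc ‖∑ t' ∈ Finset.Ico t₀ t, η t' • g t' k‖
        ≤ ∑ t' ∈ Finset.Ico t₀ t, ‖η t' • g t' k‖ := norm_sum_le _ _
      _ ≤ ∑ t' ∈ Finset.Ico t₀ t, 2 * η t * B := by
          apply Finset.sum_le_sum
          intro t' ht'
          rw [Finset.mem_Ico] at ht'
          have hle : t' ≤ t - 1 := Nat.le_sub_one_of_lt ht'.2
          rw [norm_smul, Real.norm_eq_abs, abs_of_nonneg (hηpos t')]
          calc η t' * ‖g t' k‖ ≤ (2 * η t) * B := by
                apply mul_le_mul (hηstep t' ht'.1 hle) (hg t' k ht'.1 hle)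
                  (norm_nonneg _) (by linarith [hηpos t'])
            _ = 2 * η t * B := by ring
      _ = (t - t₀ : ℕ) * (2 * η t * B) := by
          rw [Finset.sum_const, Nat.card_Ico, nsmul_eq_mul]
      _ ≤ ((E : ℝ) - 1) * (2 * η t * B) := by
          apply mul_le_mul_of_nonneg_right _ (by positivity)
          have : ((t - t₀ : ℕ) : ℝ) ≤ ((E - 1 : ℕ) : ℝ) := by exact_mod_cast htE
          rwa [Nat.cast_sub hE, Nat.cast_one] at this
      _ = M := by rw [hM]; ring
  have hvar := stmt_12_variance hn (fun k => x k - c)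
  have hmean : (1 / (n : ℝ)) • ∑ j, (x j - c) = xbar - c := by
    rw [Finset.sum_sub_distrib, smul_sub, hxbar, Finset.sum_const, Finset.card_univ,
      Fintype.card_fin, ← Nat.cast_smul_eq_nsmul ℝ, smul_smul]
    congr 1
    rw [one_div, inv_mul_cancel₀ hn0, one_smul]
  rw [hmean] at hvar
  have hsq : ∑ k : Fin n, ‖x k - c‖ ^ 2 ≤ ∑ k : Fin n, M ^ 2 := by
    apply Finset.sum_le_sum
    intro k _
    exact pow_le_pow_left₀ (norm_nonneg _) (hdev k) 2
  have hfinal : ∑ k : Fin n, ‖x k - xbar‖ ^ 2 ≤ (n : ℝ) * M ^ 2 := by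
    have : ∀ k : Fin n, x k - xbar = (x k - c) - (xbar - c) := by intro k; abel
    calc ∑ k : Fin n, ‖x k - xbar‖ ^ 2
        = ∑ k : Fin n, ‖(x k - c) - (xbar - c)‖ ^ 2 := by
          apply Finset.sum_congr rfl; intro k _; rw [← this k]
      _ ≤ ∑ k : Fin n, ‖x k - c‖ ^ 2 := hvar
      _ ≤ ∑ k : Fin n, M ^ 2 := hsq
      _ = (n : ℝ) * M ^ 2 := by
          rw [Finset.sum_const, Finset.card_univ, Fintype.card_fin, nsmul_eq_mul]
  calc (1 / (n : ℝ)) * ∑ k, ‖x k - xbar‖ ^ 2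
      ≤ (1 / (n : ℝ)) * ((n : ℝ) * M ^ 2) := by
        apply mul_le_mul_of_nonneg_left hfinal (by positivity)
    _ = M ^ 2 := by field_simp
    _ = 4 * (η t) ^ 2 * ((E : ℝ) - 1) ^ 2 * B ^ 2 := by rw [hM]; ring
end
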